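/- arXiv:1905.04123 — 2 statements merged into one kernel-verified Lean document; each statement's English description precedes it below -/
import Mathlib

section
/- For any integer N ≥ 1, ∑_{s=1}^{N} ∑_{l=1, l≠s}^{N} d_{|l-s|} e^{iβ_l} = −Λ − D, where Λ = D − 2N, D = (N²+2N)/3, β_l = 2πl/(N+1), d_m = 1/sin²(mπ/(N+1)). -/
open Real Complex Finset

noncomputable def dd (N j : ℕ) : ℝ := 1 / (Real.sin (j * π / (N + 1)))^2

noncomputable def ee (x : ℝ) : ℂ := Complex.exp (x * Complex.I)

noncomputable def βz (N : ℕ) (m : ℤ) : ℝ := 2 * π * m / (N + 1)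

-- telescoping identities
lemma tele1 (z : ℂ) (n : ℕ) : (z-1) * ∑ k ∈ range (n+1), (k:ℂ) * z^k
    = n * z^(n+1) - (∑ k ∈ range (n+1), z^k) + 1 := by
  induction n with
  | zero => simp
  | succ n ih =>
    rw [Finset.sum_range_succ, Finset.sum_range_succ (f := fun k => z^k)]
    push_cast
    ring_nf
    ring_nf at ih
    linear_combination ih

lemma tele2 (z : ℂ) (n : ℕ) : (z-1) * ∑ k ∈ range (n+1), (k:ℂ)^2 * z^k
    = (n:ℂ)^2 * z^(n+1) - 2 * (∑ k ∈ range (n+1), (k:ℂ) * z^k)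
      + (∑ k ∈ range (n+1), z^k) - 1 := by
  induction n with
  | zero => simp
  | succ n ih =>
    rw [Finset.sum_range_succ, Finset.sum_range_succ (f := fun k => z^k),
      Finset.sum_range_succ (f := fun k => (k:ℂ) * z^k)]
    push_cast
    linear_combination ih

lemma sum_sq_range (n : ℕ) : ∑ k ∈ range (n+1), (k:ℂ)^2 = n*(n+1)*(2*n+1)/6 := by
  induction n with
  | zero => simp
  | succ n ih =>
    rw [Finset.sum_range_succ, ih]
    push_cast
    ring

noncomputable def zz (N l : ℕ) : ℂ := Complex.exp ((2*π*l/(N+1) : ℝ) * Complex.I)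

lemma zz_pow (N l k : ℕ) : (zz N l)^k = Complex.exp ((2*π*(l*k)/(N+1) : ℝ) * Complex.I) := by
  rw [zz, ← Complex.exp_nat_mul]
  congr 1
  push_cast
  ring

lemma zz_pow_card (N l : ℕ) : (zz N l)^(N+1) = 1 := by
  rw [zz_pow, Complex.exp_eq_one_iff]
  refine ⟨l, ?_⟩
  have hN : ((N:ℂ)+1) ≠ 0 := Nat.cast_add_one_ne_zero N
  push_cast
  field_simp

lemma exp_ne_one (N k : ℕ) (h1 : 1 ≤ k) (h2 : k ≤ N) :
    Complex.exp ((2*π*k/(N+1) : ℝ) * Complex.I) ≠ 1 := by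
  rw [Ne, Complex.exp_eq_one_iff]
  rintro ⟨n, hn⟩
  have hI : ((2*π*k/(N+1) : ℝ) : ℂ) = (n:ℂ) * (2*π) := by
    rw [show (n:ℂ) * (2*↑π*Complex.I) = ((n:ℂ)*(2*π)) * Complex.I by ring] at hn
    exact mul_right_cancel₀ Complex.I_ne_zero hn
  have hR : (2*π*k/(N+1) : ℝ) = (n:ℝ) * (2*π) := by exact_mod_cast hI
  have hN : (0:ℝ) < (N:ℝ)+1 := by positivity
  have hπ : (0:ℝ) < π := Real.pi_pos
  have hk : (k:ℝ) = n * ((N:ℝ)+1) := by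
    field_simp at hR
    nlinarith [hR]
  have hkz : (k:ℤ) = n * ((N:ℤ)+1) := by exact_mod_cast hk
  have h1' : (1:ℤ) ≤ (k:ℤ) := by exact_mod_cast h1
  have h2' : (k:ℤ) ≤ (N:ℤ) := by exact_mod_cast h2
  rcases le_or_gt n 0 with h | h
  · nlinarith
  · nlinarith

lemma zz_ne_one (N l : ℕ) (h1 : 1 ≤ l) (h2 : l ≤ N) : zz N l ≠ 1 :=
  exp_ne_one N l h1 h2

lemma sum_Icc_eq (f : ℕ → ℂ) (N : ℕ) :
    ∑ l ∈ Icc 1 N, f l = ∑ i ∈ range N, f (i+1) := by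
  rw [show Finset.Icc 1 N = Finset.Ico 1 (N+1) by rw [Finset.Ico_add_one_right_eq_Icc],
    Finset.sum_Ico_eq_sum_range]
  simp [add_comm]

lemma sum_zz_pow (N k : ℕ) (h1 : 1 ≤ k) (h2 : k ≤ N) :
    ∑ l ∈ Icc 1 N, (zz N l)^k = -1 := by
  have key : ∀ l, (zz N l)^k = (zz N k)^l := by
    intro l
    rw [zz_pow, zz_pow]
    congr 3
    push_cast
    ring
  simp_rw [key]
  have hgeom : ∑ l ∈ range (N+1), (zz N k)^l = 0 := by
    rw [geom_sum_eq (zz_ne_one N k h1 h2), zz_pow_card]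
    simp
  rw [Finset.sum_range_succ'] at hgeom
  rw [sum_Icc_eq]
  simp only [pow_zero] at hgeom
  linear_combination hgeom
lemma sum_reflect (f : ℕ → ℂ) (N : ℕ) : ∑ l ∈ Icc 1 N, f (N+1-l) = ∑ l ∈ Icc 1 N, f l := by
  apply Finset.sum_nbij' (i := fun l => N+1-l) (j := fun l => N+1-l)
  all_goals intros a ha
  all_goals simp only [Finset.mem_Icc] at *
  all_goals first | omega | rfl

lemma zz_ne_zero (N l : ℕ) : zz N l ≠ 0 := Complex.exp_ne_zero _

lemma zz_inv (N l : ℕ) (h2 : l ≤ N) : zz N (N+1-l) = (zz N l)⁻¹ := by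
  have key : zz N (N+1-l) * zz N l = 1 := by
    rw [zz, zz, ← Complex.exp_add, ← add_mul, ← Complex.ofReal_add]
    have hl : ((N+1-l : ℕ):ℝ) = (N:ℝ)+1-l := by
      have : l ≤ N+1 := by omega
      push_cast [this]
      ring
    have harg : (2*π*((N+1-l : ℕ):ℝ)/(N+1) + 2*π*l/(N+1) : ℝ) = 2*π := by
      rw [hl]
      have hN : ((N:ℝ)+1) ≠ 0 := by positivity
      field_simp
      ring
    rw [harg]
    push_cast
    exact Complex.exp_two_pi_mul_I
  exact eq_inv_of_mul_eq_one_left key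

lemma sum_inv_zz (N : ℕ) : ∑ l ∈ Icc 1 N, (zz N l - 1)⁻¹ = -(N:ℂ)/2 := by
  have hrefl : ∑ l ∈ Icc 1 N, (zz N l - 1)⁻¹ = ∑ l ∈ Icc 1 N, ((zz N l)⁻¹ - 1)⁻¹ := by
    rw [← sum_reflect (fun l => (zz N l - 1)⁻¹) N]
    apply Finset.sum_congr rfl
    intro l hl
    simp only [Finset.mem_Icc] at hl
    rw [zz_inv N l hl.2]
  have hpt : ∀ l ∈ Icc 1 N, (zz N l - 1)⁻¹ + ((zz N l)⁻¹ - 1)⁻¹ = -1 := by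
    intro l hl
    simp only [Finset.mem_Icc] at hl
    have hz0 : zz N l ≠ 0 := zz_ne_zero N l
    have hz1 : zz N l - 1 ≠ 0 := sub_ne_zero.mpr (zz_ne_one N l hl.1 hl.2)
    have hz1' : (1:ℂ) - zz N l ≠ 0 := fun h => hz1 (by linear_combination -h)
    field_simp
    ring
  have h2T : (2:ℂ) * ∑ l ∈ Icc 1 N, (zz N l - 1)⁻¹ = -N := by
    calc (2:ℂ) * ∑ l ∈ Icc 1 N, (zz N l - 1)⁻¹
        = ∑ l ∈ Icc 1 N, ((zz N l - 1)⁻¹ + ((zz N l)⁻¹ - 1)⁻¹) := by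
          rw [Finset.sum_add_distrib, ← hrefl]; ring
      _ = ∑ l ∈ Icc 1 N, (-1 : ℂ) := Finset.sum_congr rfl hpt
      _ = -N := by simp
  linear_combination h2T / 2

lemma inv_sq_eq (N : ℕ) (z : ℂ) (hpow : z^(N+1) = 1) (hne : z ≠ 1) :
    (z - 1)⁻¹^2 = (((N:ℂ)^2-1)*(z-1)⁻¹ - ∑ k ∈ range (N+1), (k:ℂ)^2 * z^k) / (2*(N+1)) := by
  have hz1 : z - 1 ≠ 0 := sub_ne_zero.mpr hne
  have hN1 : ((N:ℂ)+1) ≠ 0 := Nat.cast_add_one_ne_zero N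
  have hgeom : ∑ k ∈ range (N+1), z^k = 0 := by
    rw [geom_sum_eq hne, hpow]
    simp
  have e1 : (z-1) * ∑ k ∈ range (N+1), (k:ℂ) * z^k = (N:ℂ) + 1 := by
    rw [tele1, hpow, hgeom]; ring
  have e2 : (z-1) * ∑ k ∈ range (N+1), (k:ℂ)^2 * z^k
      = (N:ℂ)^2 - 2 * (∑ k ∈ range (N+1), (k:ℂ) * z^k) - 1 := by
    rw [tele2, hpow, hgeom]; ring
  have hS2 : ∑ k ∈ range (N+1), (k:ℂ)^2 * z^k
      = (((N:ℂ)^2-1)*(z-1) - 2*((N:ℂ)+1))/(z-1)^2 := by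
    rw [eq_div_iff (pow_ne_zero 2 hz1)]
    linear_combination (z-1)*e2 - 2*e1
  rw [hS2]
  field_simp
  ring

lemma sum_inv_sq_zz (N : ℕ) : ∑ l ∈ Icc 1 N, ((zz N l - 1)⁻¹)^2 = (N:ℂ)*(4-N)/12 := by
  have hN1 : ((N:ℂ)+1) ≠ 0 := Nat.cast_add_one_ne_zero N
  have step : ∀ l ∈ Icc 1 N, ((zz N l - 1)⁻¹)^2
      = (((N:ℂ)^2-1)*(zz N l - 1)⁻¹ - ∑ k ∈ range (N+1), (k:ℂ)^2 * (zz N l)^k) / (2*(N+1)) := by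
    intro l hl
    simp only [Finset.mem_Icc] at hl
    exact inv_sq_eq N (zz N l) (zz_pow_card N l) (zz_ne_one N l hl.1 hl.2)
  rw [Finset.sum_congr rfl step]
  have hswap : ∑ l ∈ Icc 1 N, ∑ k ∈ range (N+1), (k:ℂ)^2 * (zz N l)^k
      = -((N:ℂ)*(N+1)*(2*N+1)/6) := by
    rw [Finset.sum_comm]
    have h1 : ∀ k ∈ range (N+1), ∑ l ∈ Icc 1 N, (k:ℂ)^2 * (zz N l)^k = -(k:ℂ)^2 := by
      intro k hk
      simp only [Finset.mem_range] at hk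
      rcases Nat.eq_zero_or_pos k with h0 | h1
      · subst h0; simp
      · rw [← Finset.mul_sum, sum_zz_pow N k h1 (by omega)]
        ring
    rw [Finset.sum_congr rfl h1]
    have : ∑ x ∈ range (N+1), -((x:ℂ)^2) = -∑ x ∈ range (N+1), (x:ℂ)^2 := by
      rw [Finset.sum_neg_distrib]
    rw [this, sum_sq_range]
  rw [← Finset.sum_div, Finset.sum_sub_distrib, ← Finset.mul_sum, sum_inv_zz, hswap]
  field_simp
  ring
lemma sin_pos_aux (N l : ℕ) (h1 : 1 ≤ l) (h2 : l ≤ N) : 0 < Real.sin ((l:ℝ)*π/((N:ℝ)+1)) := by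
  apply Real.sin_pos_of_pos_of_lt_pi
  · have h0 : (0:ℝ) < l := by exact_mod_cast h1
    positivity
  · have hN : (0:ℝ) < (N:ℝ)+1 := by positivity
    rw [div_lt_iff₀ hN]
    have : (l:ℝ) < (N:ℝ)+1 := by exact_mod_cast Nat.lt_succ_of_le h2
    nlinarith [Real.pi_pos]

lemma dd_zero (N : ℕ) : dd N 0 = 0 := by simp [dd]

lemma dd_symm (N m : ℕ) (h1 : 1 ≤ m) (h2 : m ≤ N) : dd N (N+1-m) = dd N m := by
  have hc : ((N+1-m : ℕ):ℝ) = (N:ℝ)+1-m := by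
    have : m ≤ N+1 := by omega
    push_cast [this]
    ring
  have hN : ((N:ℝ)+1) ≠ 0 := by positivity
  have hs : Real.sin (((N+1-m : ℕ):ℝ) * π/((N:ℝ)+1)) = Real.sin ((m:ℝ)*π/((N:ℝ)+1)) := by
    rw [hc, show ((N:ℝ)+1-m)*π/((N:ℝ)+1) = π - (m:ℝ)*π/((N:ℝ)+1) by field_simp,
      Real.sin_pi_sub]
  rw [dd, dd, hs]

lemma dd_cos (N l : ℕ) (h1 : 1 ≤ l) (h2 : l ≤ N) :
    dd N l * (2*Real.cos (2*((l:ℝ)*π/((N:ℝ)+1))) - 2) = -4 := by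
  set θ := (l:ℝ)*π/((N:ℝ)+1) with hθ
  have hs : Real.sin θ ≠ 0 := ne_of_gt (sin_pos_aux N l h1 h2)
  have hc : Real.cos (2*θ) = 1 - 2*(Real.sin θ)^2 := by
    rw [Real.cos_two_mul]
    nlinarith [Real.sin_sq_add_cos_sq θ]
  rw [dd, hc, ← hθ]
  field_simp
  ring

lemma zz_add_inv (N l : ℕ) :
    zz N l + (zz N l)⁻¹ = 2*(Real.cos (2*((l:ℝ)*π/((N:ℝ)+1))) : ℂ) := by
  have harg : (2*π*(l:ℝ)/((N:ℝ)+1)) = 2*((l:ℝ)*π/((N:ℝ)+1)) := by ring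
  rw [zz, harg, ← Complex.exp_neg]
  rw [show -((((2*((l:ℝ)*π/((N:ℝ)+1)) : ℝ)):ℂ) * Complex.I)
      = ((-(2*((l:ℝ)*π/((N:ℝ)+1))) : ℝ):ℂ) * Complex.I by push_cast; ring]
  rw [Complex.exp_mul_I, Complex.exp_mul_I]
  push_cast
  simp [Real.cos_neg, Real.sin_neg]
  ring

lemma dd_mul_two_cos (N l : ℕ) (h1 : 1 ≤ l) (h2 : l ≤ N) :
    (dd N l : ℂ) * (zz N l + (zz N l)⁻¹) = 2*(dd N l : ℂ) - 4 := by
  rw [zz_add_inv]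
  have := dd_cos N l h1 h2
  have hC : (dd N l : ℂ) * (2*(Real.cos (2*((l:ℝ)*π/((N:ℝ)+1))) : ℂ) - 2) = -4 := by
    exact_mod_cast congrArg (Complex.ofReal) this
  linear_combination hC

lemma dd_complex (N l : ℕ) (h1 : 1 ≤ l) (h2 : l ≤ N) :
    (dd N l : ℂ) = -4*(zz N l - 1)⁻¹ - 4*((zz N l - 1)⁻¹)^2 := by
  set z := zz N l with hz
  have hz0 : z ≠ 0 := zz_ne_zero N l
  have hz1 : z - 1 ≠ 0 := sub_ne_zero.mpr (zz_ne_one N l h1 h2)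
  have hkey : (dd N l : ℂ) * (z - 1)^2 = -4*z := by
    have hsq : (z-1)^2 = z*(z + z⁻¹ - 2) := by field_simp; ring
    rw [hsq]
    have := dd_mul_two_cos N l h1 h2
    rw [zz_add_inv] at this
    have hC := dd_cos N l h1 h2
    have hC' : (dd N l : ℂ) * (2*(Real.cos (2*((l:ℝ)*π/((N:ℝ)+1))) : ℂ) - 2) = -4 := by
      exact_mod_cast congrArg (Complex.ofReal) hC
    have h3 : z + z⁻¹ - 2 = 2*(Real.cos (2*((l:ℝ)*π/((N:ℝ)+1))) : ℂ) - 2 := by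
      rw [← zz_add_inv]
    rw [show (dd N l : ℂ) * (z*(z + z⁻¹ - 2)) = z * ((dd N l : ℂ) * (z + z⁻¹ - 2)) by ring,
      h3, hC']
    ring
  field_simp
  linear_combination hkey

lemma D_sum_complex (N : ℕ) : ∑ l ∈ Icc 1 N, (dd N l : ℂ) = ((N:ℂ)^2 + 2*N)/3 := by
  have step : ∀ l ∈ Icc 1 N, (dd N l : ℂ) = -4*(zz N l - 1)⁻¹ - 4*((zz N l - 1)⁻¹)^2 := by
    intro l hl
    simp only [Finset.mem_Icc] at hl
    exact dd_complex N l hl.1 hl.2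
  rw [Finset.sum_congr rfl step, Finset.sum_sub_distrib, ← Finset.mul_sum, ← Finset.mul_sum,
    sum_inv_zz, sum_inv_sq_zz]
  field_simp
  ring

lemma D_sum (N : ℕ) : ∑ l ∈ Icc 1 N, dd N l = ((N:ℝ)^2 + 2*N)/3 := by
  have h := D_sum_complex N
  have : ((∑ l ∈ Icc 1 N, dd N l : ℝ) : ℂ) = (((((N:ℝ)^2 + 2*N)/3) : ℝ) : ℂ) := by
    push_cast
    convert h using 2
  exact_mod_cast this

lemma Lambda_sum (N : ℕ) : ∑ l ∈ Icc 1 N, (dd N l : ℂ) * zz N l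
    = ((N:ℂ)^2 + 2*N)/3 - 2*N := by
  have hrefl : ∑ l ∈ Icc 1 N, (dd N l : ℂ) * zz N l
      = ∑ l ∈ Icc 1 N, (dd N l : ℂ) * (zz N l)⁻¹ := by
    rw [← sum_reflect (fun l => (dd N l : ℂ) * zz N l) N]
    apply Finset.sum_congr rfl
    intro l hl
    simp only [Finset.mem_Icc] at hl
    rw [dd_symm N l hl.1 hl.2, zz_inv N l hl.2]
  have h2T : (2:ℂ) * ∑ l ∈ Icc 1 N, (dd N l : ℂ) * zz N l
      = 2 * (∑ l ∈ Icc 1 N, (dd N l : ℂ)) - 4*N := by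
    calc (2:ℂ) * ∑ l ∈ Icc 1 N, (dd N l : ℂ) * zz N l
        = ∑ l ∈ Icc 1 N, (dd N l : ℂ) * (zz N l + (zz N l)⁻¹) := by
          simp_rw [mul_add]
          rw [Finset.sum_add_distrib, ← hrefl]
          ring
      _ = ∑ l ∈ Icc 1 N, (2*(dd N l : ℂ) - 4) := by
          apply Finset.sum_congr rfl
          intro l hl
          simp only [Finset.mem_Icc] at hl
          exact dd_mul_two_cos N l hl.1 hl.2
      _ = 2 * (∑ l ∈ Icc 1 N, (dd N l : ℂ)) - 4*N := by
          rw [Finset.sum_sub_distrib, ← Finset.mul_sum]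
          simp
          ring
  rw [D_sum_complex] at h2T
  linear_combination h2T / 2
lemma sum_Icc_eq' {M : Type*} [AddCommMonoid M] (f : ℕ → M) (N : ℕ) :
    ∑ l ∈ Icc 1 N, f l = ∑ i ∈ range N, f (i+1) := by
  rw [show Finset.Icc 1 N = Finset.Ico 1 (N+1) by rw [Finset.Ico_add_one_right_eq_Icc],
    Finset.sum_Ico_eq_sum_range]
  simp [add_comm]

lemma innerSumDD (N l : ℕ) (h1 : 1 ≤ l) (h2 : l ≤ N) :
    ∑ s ∈ Icc 1 N, dd N ((l:ℤ)-(s:ℤ)).natAbs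
      = (∑ m ∈ Icc 1 N, dd N m) - dd N l := by
  have sum_range_split : ∀ (g : ℕ → ℝ), ∑ i ∈ range N, g i
      = ∑ i ∈ range l, g i + ∑ i ∈ range (N-l), g (l+i) := by
    intro g
    rw [← Finset.sum_range_add, Nat.add_sub_cancel' h2]
  have p1 : ∑ i ∈ range l, dd N ((l:ℤ)-((i+1:ℕ):ℤ)).natAbs = ∑ i ∈ range l, dd N i := by
    rw [← Finset.sum_range_reflect (dd N) l]
    apply Finset.sum_congr rfl
    intro i hi
    simp only [Finset.mem_range] at hi
    congr 1
    omega
  have p2 : ∑ i ∈ range (N-l), dd N ((l:ℤ)-((l+i+1:ℕ):ℤ)).natAbs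
      = ∑ i ∈ range (N-l), dd N (l+i+1) := by
    have step1 : ∑ i ∈ range (N-l), dd N ((l:ℤ)-((l+i+1:ℕ):ℤ)).natAbs
        = ∑ i ∈ range (N-l), dd N (N-i) := by
      apply Finset.sum_congr rfl
      intro i hi
      simp only [Finset.mem_range] at hi
      have hidx : ((l:ℤ)-((l+i+1:ℕ):ℤ)).natAbs = i+1 := by omega
      rw [hidx]
      have h1' : 1 ≤ i+1 := by omega
      have h2' : i+1 ≤ N := by omega
      rw [← dd_symm N (i+1) h1' h2']
      congr 1
      omega
    rw [step1, ← Finset.sum_range_reflect (fun i => dd N (l+i+1)) (N-l)]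
    apply Finset.sum_congr rfl
    intro i hi
    simp only [Finset.mem_range] at hi
    congr 1
    omega
  have p3 : ∑ i ∈ range l, dd N (i+1) = ∑ i ∈ range l, dd N i + dd N l := by
    have a1 := Finset.sum_range_succ' (dd N) l
    have a2 := Finset.sum_range_succ (dd N) l
    rw [a2] at a1
    rw [dd_zero] at a1
    linarith
  calc ∑ s ∈ Icc 1 N, dd N ((l:ℤ)-(s:ℤ)).natAbs
      = ∑ i ∈ range l, dd N ((l:ℤ)-((i+1:ℕ):ℤ)).natAbs
        + ∑ i ∈ range (N-l), dd N ((l:ℤ)-((l+i+1:ℕ):ℤ)).natAbs := by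
        rw [sum_Icc_eq' (fun s => dd N ((l:ℤ)-(s:ℤ)).natAbs) N,
          sum_range_split (fun i => dd N ((l:ℤ)-((i+1:ℕ):ℤ)).natAbs)]
    _ = ∑ i ∈ range l, dd N i + ∑ i ∈ range (N-l), dd N (l+i+1) := by rw [p1, p2]
    _ = (∑ i ∈ range l, dd N (i+1) + ∑ i ∈ range (N-l), dd N (l+i+1)) - dd N l := by
        rw [p3]; ring
    _ = (∑ m ∈ Icc 1 N, dd N m) - dd N l := by
        rw [sum_Icc_eq' (dd N) N, sum_range_split (fun i => dd N (i+1))]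

lemma ee_eq_zz (N l : ℕ) : ee (βz N (l:ℤ)) = zz N l := by
  rw [ee, βz, zz]
  norm_num

lemma sum_zz (N : ℕ) (hN : 1 ≤ N) : ∑ l ∈ Icc 1 N, zz N l = -1 := by
  have := sum_zz_pow N 1 le_rfl hN
  simpa using this

theorem double_sum_exp_l (N : ℕ) (hN : 1 ≤ N) :
    ∑ s ∈ Finset.Icc 1 N, ∑ l ∈ (Finset.Icc 1 N).erase s,
        (dd N ((l : ℤ) - (s : ℤ)).natAbs : ℂ) * ee (βz N (l : ℤ))
      = -((((N : ℝ)^2 + 2 * N) / 3 : ℝ) - 2 * (N : ℂ))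
        - (((N : ℝ)^2 + 2 * N) / 3 : ℝ) := by
  have h1 : ∀ s ∈ Icc 1 N, ∑ l ∈ (Icc 1 N).erase s,
      (dd N ((l:ℤ)-(s:ℤ)).natAbs : ℂ) * ee (βz N (l:ℤ))
      = ∑ l ∈ Icc 1 N, (dd N ((l:ℤ)-(s:ℤ)).natAbs : ℂ) * ee (βz N (l:ℤ)) := by
    intro s hs
    rw [Finset.sum_erase_eq_sub hs]
    simp [dd_zero]
  rw [Finset.sum_congr rfl h1, Finset.sum_comm]
  have h2 : ∀ l ∈ Icc 1 N, ∑ s ∈ Icc 1 N,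
      (dd N ((l:ℤ)-(s:ℤ)).natAbs : ℂ) * ee (βz N (l:ℤ))
      = ((((N:ℝ)^2 + 2*N)/3 : ℝ) - (dd N l : ℂ)) * zz N l := by
    intro l hl
    simp only [Finset.mem_Icc] at hl
    rw [← Finset.sum_mul, ee_eq_zz]
    congr 1
    have h3 := innerSumDD N l hl.1 hl.2
    rw [D_sum N] at h3
    have hc := congrArg (Complex.ofReal) h3
    push_cast at hc ⊢
    linear_combination hc
  rw [Finset.sum_congr rfl h2]
  simp_rw [sub_mul, Finset.sum_sub_distrib, ← Finset.mul_sum]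
  rw [sum_zz N hN, Lambda_sum N]
  push_cast
  ring
end

section
/- For any integer N ≥ 2, ∑_{s=1}^{N} ∑_{l=1, l≠s}^{N} d_{|l-s|} e^{iβ_{2l}} e^{iβ_{s-l}} = −2Λ, where Λ = D − 2N, and with β indices taken mod 2π via β_m = 2πm/(N+1) for m ∈ ℤ. -/
open Real Complex Finset

lemma aux_sum_id (n : ℕ) : ∑ j ∈ range n, (j:ℂ) = n*(n-1)/2 := by
  induction n with
  | zero => simp
  | succ m ih => rw [Finset.sum_range_succ, ih]; push_cast; ring

lemma aux_sum_sq (n : ℕ) : ∑ j ∈ range n, (j:ℂ)^2 = n*(n-1)*(2*n-1)/6 := by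
  induction n with
  | zero => simp
  | succ m ih => rw [Finset.sum_range_succ, ih]; push_cast; ring

lemma aux_poly (n : ℕ) (x : ℂ) :
    (x-1) * ∑ j ∈ range n, (j:ℂ)*x^j = ((n:ℂ)-1)*x^n - ∑ j ∈ range n, x^j + 1 := by
  induction n with
  | zero => simp
  | succ m ih =>
    rw [Finset.sum_range_succ, Finset.sum_range_succ (fun j => x^j), mul_add, ih]
    push_cast; ring

lemma aux_inv (n : ℕ) (hn : 0 < n) (ξ : ℂ) (h1 : ξ^n = 1) (h2 : ξ ≠ 1) :
    (ξ - 1)⁻¹ = (∑ j ∈ range n, (j:ℂ)*ξ^j) / n := by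
  have hg : ∑ j ∈ range n, ξ^j = 0 := by
    rw [geom_sum_eq h2, h1]; simp
  have key : (ξ - 1) * ∑ j ∈ range n, (j:ℂ)*ξ^j = n := by
    rw [aux_poly, h1, hg]; ring
  have hξ1 : ξ - 1 ≠ 0 := sub_ne_zero.mpr h2
  have hn' : (n:ℂ) ≠ 0 := Nat.cast_ne_zero.mpr hn.ne'
  field_simp
  linear_combination -key

lemma aux_geom_Icc (N : ℕ) (ζ : ℂ) (hζ : IsPrimitiveRoot ζ (N+1)) (j : ℕ) :
    ∑ k ∈ Icc 1 N, (ζ^j)^k = (if (N+1) ∣ j then ((N:ℂ)+1) else 0) - 1 := by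
  have hr : Finset.range (N+1) = insert 0 (Finset.Icc 1 N) := by
    ext x; simp; omega
  have h0 : (0:ℕ) ∉ Finset.Icc 1 N := by simp
  have hsum : ∑ k ∈ range (N+1), (ζ^j)^k = 1 + ∑ k ∈ Icc 1 N, (ζ^j)^k := by
    rw [hr, Finset.sum_insert h0]; simp
  by_cases hd : (N+1) ∣ j
  · have h1 : ζ^j = 1 := (hζ.pow_eq_one_iff_dvd j).mpr hd
    rw [if_pos hd]
    have hs : ∑ k ∈ range (N+1), (ζ^j)^k = (N:ℂ)+1 := by
      rw [h1]; simp
    rw [hs] at hsum; linear_combination -hsum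
  · have h1 : ζ^j ≠ 1 := fun h => hd ((hζ.pow_eq_one_iff_dvd j).mp h)
    rw [if_neg hd]
    have hz : ∑ k ∈ range (N+1), (ζ^j)^k = 0 := by
      rw [geom_sum_eq h1, ← pow_mul, mul_comm, pow_mul, hζ.pow_eq_one]
      simp
    rw [hz] at hsum
    linear_combination -hsum

lemma aux_ne_one (N : ℕ) (ζ : ℂ) (hζ : IsPrimitiveRoot ζ (N+1)) (k : ℕ)
    (hk : k ∈ Finset.Icc 1 N) : ζ^k ≠ 1 := by
  simp only [Finset.mem_Icc] at hk
  intro h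
  have := (hζ.pow_eq_one_iff_dvd k).mp h
  have := Nat.le_of_dvd (by omega) this
  omega

lemma aux_pow_root (N : ℕ) (ζ : ℂ) (hζ : IsPrimitiveRoot ζ (N+1)) (k : ℕ) :
    (ζ^k)^(N+1) = 1 := by
  rw [← pow_mul, mul_comm, pow_mul, hζ.pow_eq_one, one_pow]

lemma aux_S1 (N : ℕ) (ζ : ℂ) (hζ : IsPrimitiveRoot ζ (N+1)) :
    ∑ k ∈ Icc 1 N, (ζ^k - 1)⁻¹ = -(N:ℂ)/2 := by
  have hnc : ((N:ℂ)+1) ≠ 0 := by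
    have : ((N+1:ℕ):ℂ) ≠ 0 := Nat.cast_ne_zero.mpr (Nat.succ_ne_zero N)
    push_cast at this; exact this
  have step1 : ∑ k ∈ Icc 1 N, (ζ^k - 1)⁻¹
      = ∑ k ∈ Icc 1 N, (∑ j ∈ range (N+1), (j:ℂ)*(ζ^j)^k) / ((N:ℂ)+1) := by
    refine Finset.sum_congr rfl (fun k hk => ?_)
    rw [aux_inv (N+1) (Nat.succ_pos N) (ζ^k) (aux_pow_root N ζ hζ k) (aux_ne_one N ζ hζ k hk)]
    push_cast
    congr 1
    refine Finset.sum_congr rfl (fun j _ => ?_)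
    rw [← pow_mul, ← pow_mul, mul_comm k j]
  rw [step1, ← Finset.sum_div, Finset.sum_comm]
  have step2 : ∀ j ∈ range (N+1), ∑ k ∈ Icc 1 N, (j:ℂ)*(ζ^j)^k
      = (j:ℂ) * ((if (N+1) ∣ j then ((N:ℂ)+1) else 0) - 1) := by
    intro j _
    rw [← Finset.mul_sum, aux_geom_Icc N ζ hζ j]
  rw [Finset.sum_congr rfl step2]
  have step3 : ∑ j ∈ range (N+1), (j:ℂ) * ((if (N+1) ∣ j then ((N:ℂ)+1) else 0) - 1)
      = - ∑ j ∈ range (N+1), (j:ℂ) := by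
    rw [← Finset.sum_neg_distrib]
    refine Finset.sum_congr rfl (fun j hj => ?_)
    simp only [Finset.mem_range] at hj
    rcases Nat.eq_zero_or_pos j with h0 | h0
    · subst h0; simp
    · rw [if_neg (by intro hd; have := Nat.le_of_dvd h0 hd; omega)]
      ring
  rw [step3, aux_sum_id]
  push_cast
  field_simp
  ring

lemma aux_T (N : ℕ) (j : ℕ) (hj : j ∈ range (N+1)) :
    ∑ m ∈ range (N+1), (if (N+1) ∣ (j+m) then ((N:ℂ)+1)*j*m else 0)
      = ((N:ℂ)+1)*j*(((N:ℂ)+1)-j) := by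
  simp only [Finset.mem_range] at hj
  rcases Nat.eq_zero_or_pos j with h0 | h0
  · subst h0
    rw [Finset.sum_eq_zero]
    · simp
    · intro m hm
      split <;> simp
  · rw [Finset.sum_eq_single_of_mem (N+1-j)]
    · have hdvd : (N+1) ∣ (j + (N+1-j)) := ⟨1, by omega⟩
      rw [if_pos hdvd]
      have : ((N+1-j:ℕ):ℂ) = ((N:ℂ)+1) - j := by
        push_cast [Nat.cast_sub (by omega : j ≤ N+1)]; ring
      rw [this]
    · simp only [Finset.mem_range]; omega
    · intro m hm hne
      simp only [Finset.mem_range] at hm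
      rw [if_neg]
      intro hd
      have h1 : N+1 ≤ j+m := Nat.le_of_dvd (by omega) hd
      have h2 : (N+1) ∣ (j+m - (N+1)) := Nat.dvd_sub hd dvd_rfl
      have h3 : j+m - (N+1) = 0 := Nat.eq_zero_of_dvd_of_lt h2 (by omega)
      omega

lemma aux_S2 (N : ℕ) (ζ : ℂ) (hζ : IsPrimitiveRoot ζ (N+1)) :
    ∑ k ∈ Icc 1 N, ((ζ^k - 1)⁻¹)^2 = (N:ℂ)*(4-(N:ℂ))/12 := by
  have hnc : ((N:ℂ)+1) ≠ 0 := by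
    have : ((N+1:ℕ):ℂ) ≠ 0 := Nat.cast_ne_zero.mpr (Nat.succ_ne_zero N)
    push_cast at this; exact this
  have step1 : ∑ k ∈ Icc 1 N, ((ζ^k - 1)⁻¹)^2
      = ∑ k ∈ Icc 1 N, (∑ j ∈ range (N+1), ∑ m ∈ range (N+1),
          (j:ℂ)*(m:ℂ)*(ζ^(j+m))^k) / (((N:ℂ)+1)*((N:ℂ)+1)) := by
    refine Finset.sum_congr rfl (fun k hk => ?_)
    rw [aux_inv (N+1) (Nat.succ_pos N) (ζ^k) (aux_pow_root N ζ hζ k) (aux_ne_one N ζ hζ k hk)]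
    rw [div_pow, pow_two, pow_two, Finset.sum_mul_sum]
    congr 1
    · refine Finset.sum_congr rfl (fun j _ => ?_)
      refine Finset.sum_congr rfl (fun m _ => ?_)
      have hpow : (ζ^(j+m))^k = (ζ^k)^j * (ζ^k)^m := by
        rw [← pow_mul, ← pow_mul, ← pow_mul, ← pow_add, ← Nat.mul_add]
        congr 1
        ring
      rw [hpow]
      ring
    · push_cast
      ring
  rw [step1, ← Finset.sum_div, Finset.sum_comm]
  have step2 : ∑ j ∈ range (N+1), ∑ k ∈ Icc 1 N, ∑ m ∈ range (N+1), (j:ℂ)*(m:ℂ)*(ζ^(j+m))^k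
      = ∑ j ∈ range (N+1), ∑ m ∈ range (N+1), (j:ℂ)*(m:ℂ)
           * ((if (N+1) ∣ (j+m) then ((N:ℂ)+1) else 0) - 1) := by
    refine Finset.sum_congr rfl (fun j _ => ?_)
    rw [Finset.sum_comm]
    refine Finset.sum_congr rfl (fun m _ => ?_)
    rw [← Finset.mul_sum, aux_geom_Icc N ζ hζ (j+m)]
  rw [step2]
  have step3 : ∑ j ∈ range (N+1), ∑ m ∈ range (N+1), (j:ℂ)*(m:ℂ)
           * ((if (N+1) ∣ (j+m) then ((N:ℂ)+1) else 0) - 1)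
      = ∑ j ∈ range (N+1), (((N:ℂ)+1)*j*(((N:ℂ)+1)-j)
          - (j:ℂ) * ∑ m ∈ range (N+1), (m:ℂ)) := by
    refine Finset.sum_congr rfl (fun j hj => ?_)
    have hsplit : ∀ m ∈ range (N+1), (j:ℂ)*(m:ℂ)*((if (N+1) ∣ (j+m) then ((N:ℂ)+1) else 0) - 1)
        = (if (N+1) ∣ (j+m) then ((N:ℂ)+1)*j*m else 0) - (j:ℂ)*(m:ℂ) := by
      intro m _
      split <;> ring
    rw [Finset.sum_congr rfl hsplit, Finset.sum_sub_distrib, aux_T N j hj, ← Finset.mul_sum]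
  rw [step3]
  have step4 : ∑ j ∈ range (N+1), (((N:ℂ)+1)*j*(((N:ℂ)+1)-j)
          - (j:ℂ) * ∑ m ∈ range (N+1), (m:ℂ))
      = ∑ j ∈ range (N+1), ((((N:ℂ)+1)*((N:ℂ)+1) - ((N:ℂ)+1)*(N:ℂ)/2)*(j:ℂ)
          - ((N:ℂ)+1)*(j:ℂ)^2) := by
    refine Finset.sum_congr rfl (fun j _ => ?_)
    rw [aux_sum_id]
    push_cast
    ring
  rw [step4, Finset.sum_sub_distrib, ← Finset.mul_sum, ← Finset.mul_sum, aux_sum_id, aux_sum_sq]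
  push_cast
  field_simp
  ring

lemma aux_ee (N : ℕ) (m : ℤ) :
    ee (βz N m) = (Complex.exp (2*(π:ℂ)*Complex.I/((N+1:ℕ):ℂ)))^m := by
  rw [← Complex.exp_int_mul]
  unfold ee βz
  congr 1
  have h : ((N+1:ℕ):ℂ) ≠ 0 := Nat.cast_ne_zero.mpr (Nat.succ_ne_zero N)
  push_cast
  push_cast at h
  field_simp

lemma aux_dd (N k : ℕ) (hk1 : 1 ≤ k) (hk2 : k ≤ N) :
    ((dd N k : ℝ) : ℂ) = -4 * (Complex.exp (2*(π:ℂ)*Complex.I/((N+1:ℕ):ℂ)))^k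
      * (((Complex.exp (2*(π:ℂ)*Complex.I/((N+1:ℕ):ℂ)))^k - 1)⁻¹)^2 := by
  set ω := Complex.exp (2*(π:ℂ)*Complex.I/((N+1:ℕ):ℂ)) with hω
  have hζ : IsPrimitiveRoot ω (N+1) := Complex.isPrimitiveRoot_exp (N+1) (Nat.succ_ne_zero N)
  set θ : ℝ := k * π / (N + 1) with hθ
  have hθpos : 0 < θ := by
    apply div_pos
    · exact mul_pos (by exact_mod_cast hk1) Real.pi_pos
    · positivity
  have hθlt : θ < π := by
    rw [hθ, div_lt_iff₀ (by positivity)]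
    have : (k:ℝ) < N + 1 := by exact_mod_cast Nat.lt_succ_of_le hk2
    nlinarith [Real.pi_pos]
  have hsin : Real.sin θ ≠ 0 := (Real.sin_pos_of_pos_of_lt_pi hθpos hθlt).ne'
  have hnc : ((N+1:ℕ):ℂ) ≠ 0 := Nat.cast_ne_zero.mpr (Nat.succ_ne_zero N)
  have hωk : ω^k = Complex.exp ((θ:ℂ)*Complex.I) ^ 2 := by
    rw [hω, ← Complex.exp_nat_mul, ← Complex.exp_nat_mul]
    congr 1
    rw [hθ]
    push_cast
    field_simp
  set μ := Complex.exp ((θ:ℂ)*Complex.I) with hμ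
  have hμ0 : μ ≠ 0 := Complex.exp_ne_zero _
  have hsinμ : Complex.sin (θ:ℂ) = (μ⁻¹ - μ) * Complex.I / 2 := by
    rw [Complex.sin, hμ, ← Complex.exp_neg]
    ring_nf
  have key : (ω^k - 1)^2 = -4 * ω^k * (Complex.sin (θ:ℂ))^2 := by
    rw [hωk, hsinμ]
    have hI := Complex.I_sq
    field_simp
    ring_nf
    rw [Complex.I_sq]
    ring
  have hne1 : ω^k ≠ 1 := by
    intro h
    have := (hζ.pow_eq_one_iff_dvd k).mp h
    have := Nat.le_of_dvd (by omega) this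
    omega
  have hd : ω^k - 1 ≠ 0 := sub_ne_zero.mpr hne1
  have hωk0 : ω^k ≠ 0 := pow_ne_zero _ (Complex.exp_ne_zero _)
  have hsc : Complex.sin (θ:ℂ) ≠ 0 := by
    rw [← Complex.ofReal_sin]
    exact Complex.ofReal_ne_zero.mpr hsin
  have hdd : ((dd N k : ℝ):ℂ) = (Complex.sin (θ:ℂ))⁻¹^2 := by
    unfold dd
    rw [hθ]
    push_cast
    ring
  rw [hdd]
  field_simp
  linear_combination key


theorem double_sum_2l (N : ℕ) (hN : 2 ≤ N) :
    ∑ s ∈ Finset.Icc 1 N, ∑ l ∈ (Finset.Icc 1 N).erase s,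
        (dd N ((l : ℤ) - (s : ℤ)).natAbs : ℂ) * ee (βz N (2 * (l : ℤ)))
          * ee (βz N ((s : ℤ) - (l : ℤ)))
      = -2 * ((((N : ℝ)^2 + 2 * N) / 3 : ℝ) - 2 * (N : ℂ)) := by
  set ω : ℂ := Complex.exp (2*(π:ℂ)*Complex.I/((N+1:ℕ):ℂ)) with hωdef
  have hζ : IsPrimitiveRoot ω (N+1) := Complex.isPrimitiveRoot_exp (N+1) (Nat.succ_ne_zero N)
  have hω0 : ω ≠ 0 := Complex.exp_ne_zero _
  have hpow1 : ω^(((N:ℤ))+1) = 1 := by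
    have : ω^(((N+1:ℕ)):ℤ) = 1 := by
      rw [zpow_natCast, hζ.pow_eq_one]
    rwa [show (((N+1:ℕ)):ℤ) = (N:ℤ)+1 by push_cast; ring] at this
  have hne1 : ∀ k : ℤ, ¬ (((N:ℤ)+1) ∣ k) → ω^k ≠ 1 := by
    intro k hk h
    apply hk
    have := (hζ.zpow_eq_one_iff_dvd k).mp h
    rwa [show (((N+1:ℕ)):ℤ) = (N:ℤ)+1 by push_cast; ring] at this
  have hnatne1 : ∀ k : ℕ, 1 ≤ k → k ≤ N → ω^k ≠ 1 := by
    intro k h1 h2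
    exact aux_ne_one N ω hζ k (by simp [Finset.mem_Icc]; omega)
  have hsym : ∀ c : ℤ, ω^c ≠ 1 → -4*ω^(-c)*((ω^(-c)-1)⁻¹)^2 = -4*ω^c*((ω^c-1)⁻¹)^2 := by
    intro c hc
    have hu0 : ω^c ≠ 0 := zpow_ne_zero _ hω0
    have hd1 : ω^c - 1 ≠ 0 := sub_ne_zero.mpr hc
    rw [zpow_neg]
    have h1 : ((ω^c)⁻¹ - 1)⁻¹ = -(ω^c * (ω^c - 1)⁻¹) := by
      rw [show (ω^c)⁻¹ - 1 = -((ω^c - 1) * (ω^c)⁻¹) by field_simp; ring]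
      rw [inv_neg, mul_inv, inv_inv]
      ring
    rw [h1]
    have e : ω^c * (ω^c)⁻¹ = 1 := mul_inv_cancel₀ hu0
    linear_combination (-4*ω^c*((ω^c-1)⁻¹)^2) * e
  have hstep1 : ∑ s ∈ Finset.Icc 1 N, ∑ l ∈ (Finset.Icc 1 N).erase s,
        (dd N ((l : ℤ) - (s : ℤ)).natAbs : ℂ) * ee (βz N (2 * (l : ℤ)))
          * ee (βz N ((s : ℤ) - (l : ℤ)))
      = ∑ s ∈ Finset.Icc 1 N, ∑ l ∈ (Finset.Icc 1 N).erase s,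
          (-4) * ω^(2*(l:ℤ)) * ((ω^((l:ℤ)-(s:ℤ))-1)⁻¹)^2 := by
    refine Finset.sum_congr rfl fun s hs => Finset.sum_congr rfl fun l hl => ?_
    simp only [Finset.mem_Icc] at hs
    simp only [Finset.mem_erase, Finset.mem_Icc] at hl
    have hee1 : ee (βz N (2*(l:ℤ))) = ω^(2*(l:ℤ)) := aux_ee N _
    have hee2 : ee (βz N ((s:ℤ)-(l:ℤ))) = ω^((s:ℤ)-(l:ℤ)) := aux_ee N _
    set k := ((l:ℤ)-(s:ℤ)).natAbs with hkdef
    have hk1 : 1 ≤ k := by omega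
    have hk2 : k ≤ N := by omega
    rw [hee1, hee2, aux_dd N k hk1 hk2, ← hωdef, ← zpow_natCast ω k]
    rcases le_or_gt (s:ℤ) (l:ℤ) with hsl | hsl
    · have hkk : ((k:ℕ):ℤ) = (l:ℤ) - s := by omega
      rw [hkk]
      have e1 : ω^((l:ℤ)-s) * ω^((s:ℤ)-l) = 1 := by
        rw [← zpow_add₀ hω0, show ((l:ℤ)-s) + ((s:ℤ)-l) = 0 by ring, zpow_zero]
      linear_combination (-4*ω^(2*(l:ℤ))*(((ω^((l:ℤ)-s)-1)⁻¹))^2) * e1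
    · have hkk : ((k:ℕ):ℤ) = (s:ℤ) - l := by omega
      rw [hkk]
      have hc : ω^((s:ℤ)-l) ≠ 1 := by
        apply hne1
        intro hdvd
        have := Int.le_of_dvd (by omega) hdvd
        omega
      have hs2 := hsym ((s:ℤ)-l) hc
      have e2 : ω^((s:ℤ)-l) * ω^(-((s:ℤ)-l)) = 1 := by
        rw [← zpow_add₀ hω0, show ((s:ℤ)-l) + (-((s:ℤ)-l)) = 0 by ring, zpow_zero]
      have hneg : ω^((l:ℤ)-s) = ω^(-((s:ℤ)-l)) := by
        rw [show ((l:ℤ)-s) = -((s:ℤ)-l) by ring]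
      rw [hneg]
      linear_combination (-(ω^(2*(l:ℤ)))*ω^((s:ℤ)-l)) * hs2
        + (-4*ω^(2*(l:ℤ))*((ω^(-((s:ℤ)-l))-1)⁻¹)^2) * e2
  rw [hstep1]
  rw [Finset.sum_comm' (by
    intro x y
    simp only [Finset.mem_erase, Finset.mem_Icc]
    omega : ∀ (x y : ℕ), x ∈ Finset.Icc 1 N ∧ y ∈ (Finset.Icc 1 N).erase x
      ↔ x ∈ (Finset.Icc 1 N).erase y ∧ y ∈ Finset.Icc 1 N)]
  -- now: ∑ l ∈ Icc 1 N, ∑ s ∈ (Icc 1 N).erase l, -4*ω^(2l)*((ω^(l-s)-1)⁻¹)^2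
  have hinner : ∀ l ∈ Finset.Icc 1 N,
      ∑ s ∈ (Finset.Icc 1 N).erase l, ((ω^((l:ℤ)-(s:ℤ))-1)⁻¹)^2
        = (N:ℂ)*(4-(N:ℂ))/12 - ((ω^l-1)⁻¹)^2 := by
    intro l hl
    have hlm := hl
    simp only [Finset.mem_Icc] at hlm
    have hbij : ∑ s ∈ (Finset.Icc 1 N).erase l, ((ω^((l:ℤ)-(s:ℤ))-1)⁻¹)^2
        = ∑ k ∈ (Finset.Icc 1 N).erase l, ((ω^k-1)⁻¹)^2 := by
      refine Finset.sum_nbij' (fun s => if s < l then l - s else l + (N+1) - s)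
        (fun s => if s < l then l - s else l + (N+1) - s) ?_ ?_ ?_ ?_ ?_
      · intro a ha
        simp only [Finset.mem_erase, Finset.mem_Icc] at ha ⊢
        split <;> omega
      · intro a ha
        simp only [Finset.mem_erase, Finset.mem_Icc] at ha ⊢
        split <;> omega
      · intro a ha
        simp only [Finset.mem_erase, Finset.mem_Icc] at ha
        split <;> split <;> omega
      · intro a ha
        simp only [Finset.mem_erase, Finset.mem_Icc] at ha
        split <;> split <;> omega
      · intro s hs
        simp only [Finset.mem_erase, Finset.mem_Icc] at hs
        by_cases hsl : s < l
        · rw [if_pos hsl]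
          have hcast2 : ((l - s:ℕ):ℤ) = (l:ℤ) - s := by omega
          rw [← zpow_natCast ω (l-s), hcast2]
        · rw [if_neg hsl]
          have hcast : ((l + (N+1) - s : ℕ):ℤ) = ((l:ℤ)-s) + ((N:ℤ)+1) := by omega
          rw [← zpow_natCast ω (l + (N+1) - s), hcast, zpow_add₀ hω0, hpow1, mul_one]
    rw [hbij]
    have := Finset.sum_erase_add (Finset.Icc 1 N) (fun k => ((ω^k-1)⁻¹)^2) hl
    have hS2 := aux_S2 N ω hζ
    rw [hS2] at this
    linear_combination this
  have hstep2 : ∀ l ∈ Finset.Icc 1 N,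
      ∑ s ∈ (Finset.Icc 1 N).erase l, (-4) * ω^(2*(l:ℤ)) * ((ω^((l:ℤ)-(s:ℤ))-1)⁻¹)^2
        = (-4*((N:ℂ)*(4-(N:ℂ))/12)) * (ω^2)^l
          + 4*(1 + 2*(ω^l-1)⁻¹ + ((ω^l-1)⁻¹)^2) := by
    intro l hl
    have hlm := hl
    simp only [Finset.mem_Icc] at hlm
    have hpow2 : ω^(2*(l:ℤ)) = (ω^2)^l := by
      have hc2l : (2*(l:ℤ)) = ((2*l : ℕ):ℤ) := by push_cast; ring
      rw [hc2l, zpow_natCast, pow_mul]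
    have hsum : ∑ s ∈ (Finset.Icc 1 N).erase l, (-4) * ω^(2*(l:ℤ)) * ((ω^((l:ℤ)-(s:ℤ))-1)⁻¹)^2
        = (-4) * ω^(2*(l:ℤ)) * ∑ s ∈ (Finset.Icc 1 N).erase l, ((ω^((l:ℤ)-(s:ℤ))-1)⁻¹)^2 := by
      rw [Finset.mul_sum]
    rw [hsum, hinner l hl, hpow2]
    have hu1 : ω^l ≠ 1 := hnatne1 l hlm.1 hlm.2
    have hu0 : ω^l ≠ 0 := pow_ne_zero _ hω0
    have hd1 : ω^l - 1 ≠ 0 := sub_ne_zero.mpr hu1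
    have hsq : (ω^2)^l = (ω^l)^2 := by
      rw [← pow_mul, ← pow_mul, Nat.mul_comm]
    have hkey : (ω^2)^l * ((ω^l-1)⁻¹)^2 = 1 + 2*(ω^l-1)⁻¹ + ((ω^l-1)⁻¹)^2 := by
      rw [hsq]
      field_simp
      ring
    linear_combination (4 : ℂ) * hkey
  rw [Finset.sum_congr rfl hstep2]
  rw [Finset.sum_add_distrib, ← Finset.mul_sum, ← Finset.mul_sum]
  have hgeom2 : ∑ l ∈ Finset.Icc 1 N, (ω^2)^l = -1 := by
    rw [aux_geom_Icc N ω hζ 2, if_neg (by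
      intro h
      have := Nat.le_of_dvd (by omega) h
      omega)]
    ring
  have hsplit : ∑ l ∈ Finset.Icc 1 N, (1 + 2*(ω^l-1)⁻¹ + ((ω^l-1)⁻¹)^2)
      = (N:ℂ) + 2*(-(N:ℂ)/2) + (N:ℂ)*(4-(N:ℂ))/12 := by
    rw [Finset.sum_add_distrib, Finset.sum_add_distrib, ← Finset.mul_sum,
      aux_S1 N ω hζ, aux_S2 N ω hζ, Finset.sum_const, Nat.card_Icc]
    simp
  rw [hgeom2, hsplit]
  push_cast
  ring
end
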